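/- Fix n ≥ 1, positive constants k_p, k_w, α₁, …, αₙ, γ > 0, vectors e₁, …, eₙ, y₁, …, yₙ, b̃_Ω, b̃_V ∈ ℝ³, and R̂ ∈ SO(3). Define ψ(eᵢ) = k_p(1 + ‖eᵢ‖²)/4, ṗ̂ᵢ = −ψ(eᵢ)eᵢ, W_Ω = −k_w Σᵢ (1/αᵢ)[yᵢ]× R̂ᵀ eᵢ, W_V = −k_w Σᵢ (1/αᵢ) R̂ᵀ eᵢ, ḃ̂_Ω = −γ Σᵢ (1/αᵢ)[yᵢ]× R̂ᵀ eᵢ, ḃ̂_V = −γ Σᵢ (1/αᵢ) R̂ᵀ eᵢ, and ėᵢ = ṗ̂ᵢ + R̂[yᵢ]×(b̃_Ω − W_Ω) − R̂(b̃_V − W_V). Then the Lyapunov derivative V̇ = Σᵢ (1/αᵢ) eᵢᵀ ėᵢ − (1/γ) b̃_Ωᵀ ḃ̂_Ω − (1/γ) b̃_Vᵀ ḃ̂_V satisfies V̇ = −Σᵢ (ψ(eᵢ)/αᵢ)‖eᵢ‖² − k_w‖Σᵢ (1/αᵢ)[yᵢ]× R̂ᵀ eᵢ‖² − k_w‖Σᵢ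 (1/αᵢ) eᵢ‖², and in particular V̇ ≤ −Σᵢ (ψ(eᵢ)/αᵢ)‖eᵢ‖² − k_w‖Σᵢ eᵢ/αᵢ‖² ≤ 0. -/

import Mathlib

open Matrix Real Filter Topology

/-- Skew-symmetric (cross-product) matrix `[y]×`. -/
def skew (y : Fin 3 → ℝ) : Matrix (Fin 3) (Fin 3) ℝ :=
  !![0, -y 2, y 1; y 2, 0, -y 0; -y 1, y 0, 0]

/-- Homogeneous transformation matrix `[[R, P],[0,1]]`. -/
def hom (R : Matrix (Fin 3) (Fin 3) ℝ) (P : Fin 3 → ℝ) :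
    Matrix (Fin 3 ⊕ Fin 1) (Fin 3 ⊕ Fin 1) ℝ :=
  Matrix.fromBlocks R (Matrix.replicateCol (Fin 1) P) 0 1

/-- Wedge map `[U]∧` for `U = (u₁, u₂) ∈ ℝ⁶`. -/
def wedge (u₁ u₂ : Fin 3 → ℝ) : Matrix (Fin 3 ⊕ Fin 1) (Fin 3 ⊕ Fin 1) ℝ :=
  Matrix.fromBlocks (skew u₁) (Matrix.replicateCol (Fin 1) u₂) 0 0

/-- Euclidean norm on ℝ³: `‖v‖ = √(vᵀ v)`. -/
noncomputable def norm3 (v : Fin 3 → ℝ) : ℝ := Real.sqrt (v ⬝ᵥ v)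

/-- Rodrigues (angle-axis) rotation matrix. -/
noncomputable def rodrigues (θ : ℝ) (x : Fin 3 → ℝ) : Matrix (Fin 3) (Fin 3) ℝ :=
  1 + Real.sin θ • skew x + (1 - Real.cos θ) • (skew x * skew x)

/-- Homogeneous 4-vector `(v, a)ᵀ`. -/
def vec4 (v : Fin 3 → ℝ) (a : ℝ) : Fin 3 ⊕ Fin 1 → ℝ := Sum.elim v (fun _ => a)

/-! Along the error dynamics each `eᵢ ⬝ ėᵢ` splits into the fast-adaptation term `-ψ(eᵢ)‖eᵢ‖²`
and pairings of `[yᵢ]× R̂ᵀ eᵢ` and `R̂ᵀ eᵢ` with `b̃_Ω - W_Ω` and `b̃_V - W_V`, because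
`([yᵢ]×)ᵀ = -[yᵢ]×`. Summed with weights `1/αᵢ`, the bias pairings are cancelled exactly by the
adaptation laws, and the `W` pairings leave `-k_w‖S‖² - k_w‖R̂ᵀ E‖²` with
`S = Σᵢ αᵢ⁻¹ [yᵢ]× R̂ᵀ eᵢ` and `E = Σᵢ αᵢ⁻¹ eᵢ`, where `‖R̂ᵀ E‖ = ‖E‖` since `R̂` is orthogonal. -/

section OrthogonalDotProduct

variable {m : Type*} [Fintype m] (R K : Matrix m m ℝ) (v w : m → ℝ)

lemma dotProduct_mulVec_eq_transpose_mulVec_dotProduct :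
    v ⬝ᵥ R *ᵥ w = (Rᵀ *ᵥ v) ⬝ᵥ w := by
  rw [dotProduct_mulVec, mulVec_transpose]

lemma dotProduct_mul_mulVec_of_transpose_eq_neg (hK : Kᵀ = -K) :
    v ⬝ᵥ (R * K) *ᵥ w = -((K *ᵥ (Rᵀ *ᵥ v)) ⬝ᵥ w) := by
  rw [dotProduct_mulVec_eq_transpose_mulVec_dotProduct, transpose_mul, hK, neg_mul, neg_mulVec,
    neg_dotProduct, ← mulVec_mulVec]

lemma transpose_mulVec_dotProduct_self [DecidableEq m] (hR : R * Rᵀ = 1) :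
    (Rᵀ *ᵥ v) ⬝ᵥ (Rᵀ *ᵥ v) = v ⬝ᵥ v := by
  rw [← dotProduct_mulVec_eq_transpose_mulVec_dotProduct, mulVec_mulVec, hR, one_mulVec]

end OrthogonalDotProduct

lemma skew_transpose (y : Fin 3 → ℝ) : (skew y)ᵀ = -skew y := by
  ext i j
  fin_cases i <;> fin_cases j <;> simp [skew]

lemma norm3_sq (v : Fin 3 → ℝ) : norm3 v ^ 2 = v ⬝ᵥ v :=
  Real.sq_sqrt (Finset.sum_nonneg fun i _ => mul_self_nonneg (v i))

lemma dotProduct_error_dynamics (c : ℝ) (e y u w : Fin 3 → ℝ) (R : Matrix (Fin 3) (Fin 3) ℝ) :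
    e ⬝ᵥ (-c • e + (R * skew y) *ᵥ u - R *ᵥ w)
      = -(c * (e ⬝ᵥ e)) - (skew y *ᵥ (Rᵀ *ᵥ e)) ⬝ᵥ u - (Rᵀ *ᵥ e) ⬝ᵥ w := by
  rw [dotProduct_sub, dotProduct_add, dotProduct_smul, smul_eq_mul,
    dotProduct_mul_mulVec_of_transpose_eq_neg _ _ _ _ (skew_transpose y),
    dotProduct_mulVec_eq_transpose_mulVec_dotProduct]
  ring

lemma sum_weighted_dotProduct_error_dynamics {n : ℕ} (a c : Fin n → ℝ)
    (e y : Fin n → Fin 3 → ℝ) (u w : Fin 3 → ℝ) (R : Matrix (Fin 3) (Fin 3) ℝ) :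
    ∑ i, a i * (e i ⬝ᵥ (-c i • e i + (R * skew (y i)) *ᵥ u - R *ᵥ w))
      = -(∑ i, a i * c i * (e i ⬝ᵥ e i))
        - (∑ i, a i • (skew (y i) *ᵥ (Rᵀ *ᵥ e i))) ⬝ᵥ u
        - (Rᵀ *ᵥ ∑ i, a i • e i) ⬝ᵥ w := by
  simp only [dotProduct_error_dynamics, sum_dotProduct, mulVec_sum, mulVec_smul, smul_dotProduct,
    smul_eq_mul, mul_sub, mul_neg, Finset.sum_sub_distrib, Finset.sum_neg_distrib, mul_assoc]

theorem lyapunov_derivative_general (n : ℕ) (kp kw γ : ℝ)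
    (hkp : 0 < kp) (hkw : 0 < kw) (hγ : 0 < γ)
    (α : Fin n → ℝ) (hα : ∀ i, 0 < α i)
    (e y : Fin n → Fin 3 → ℝ) (bΩ bV : Fin 3 → ℝ)
    (Rh : Matrix (Fin 3) (Fin 3) ℝ) (hRh : Rh * Rhᵀ = 1)
    (ψ : (Fin 3 → ℝ) → ℝ) (hψ : ∀ v, ψ v = kp * (1 + norm3 v ^ 2) / 4)
    (ph' : Fin n → Fin 3 → ℝ) (hph' : ∀ i, ph' i = -(ψ (e i)) • e i)
    (WΩ WV bhΩ' bhV' : Fin 3 → ℝ)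
    (hWΩ : WΩ = -(kw • ∑ i, (α i)⁻¹ • (skew (y i) *ᵥ (Rhᵀ *ᵥ e i))))
    (hWV : WV = -(kw • ∑ i, (α i)⁻¹ • (Rhᵀ *ᵥ e i)))
    (hbΩ' : bhΩ' = -(γ • ∑ i, (α i)⁻¹ • (skew (y i) *ᵥ (Rhᵀ *ᵥ e i))))
    (hbV' : bhV' = -(γ • ∑ i, (α i)⁻¹ • (Rhᵀ *ᵥ e i)))
    (e' : Fin n → Fin 3 → ℝ)
    (he' : ∀ i, e' i = ph' i + (Rh * skew (y i)) *ᵥ (bΩ - WΩ) - Rh *ᵥ (bV - WV))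
    (Vdot : ℝ)
    (hVdot : Vdot = (∑ i, (α i)⁻¹ * (e i ⬝ᵥ e' i))
      - γ⁻¹ * (bΩ ⬝ᵥ bhΩ') - γ⁻¹ * (bV ⬝ᵥ bhV')) :
    Vdot = -(∑ i, ψ (e i) / α i * norm3 (e i) ^ 2)
        - kw * norm3 (∑ i, (α i)⁻¹ • (skew (y i) *ᵥ (Rhᵀ *ᵥ e i))) ^ 2
        - kw * norm3 (∑ i, (α i)⁻¹ • e i) ^ 2 ∧
    Vdot ≤ -(∑ i, ψ (e i) / α i * norm3 (e i) ^ 2)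
        - kw * norm3 (∑ i, (α i)⁻¹ • e i) ^ 2 ∧
    Vdot ≤ 0 := by
  set S := ∑ i, (α i)⁻¹ • (skew (y i) *ᵥ (Rhᵀ *ᵥ e i))
  set E := ∑ i, (α i)⁻¹ • e i
  have hT : ∑ i, (α i)⁻¹ • (Rhᵀ *ᵥ e i) = Rhᵀ *ᵥ E := by
    simp only [E, mulVec_sum, mulVec_smul]
  have he'_eq (i : Fin n) : e' i = -ψ (e i) • e i + (Rh * skew (y i)) *ᵥ (bΩ + kw • S)
      - Rh *ᵥ (bV + kw • (Rhᵀ *ᵥ E)) := by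
    rw [he', hph', hWΩ, hWV, hT, sub_neg_eq_add, sub_neg_eq_add]
  have hVdot_eq : Vdot = -(∑ i, ψ (e i) / α i * norm3 (e i) ^ 2) - kw * norm3 S ^ 2
      - kw * norm3 E ^ 2 := by
    simp only [norm3_sq]
    have hsum : ∑ i, (α i)⁻¹ * (e i ⬝ᵥ e' i) = -(∑ i, (α i)⁻¹ * ψ (e i) * (e i ⬝ᵥ e i))
        - S ⬝ᵥ (bΩ + kw • S) - (Rhᵀ *ᵥ E) ⬝ᵥ (bV + kw • (Rhᵀ *ᵥ E)) := by
      simp only [he'_eq]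
      exact sum_weighted_dotProduct_error_dynamics _ _ _ _ _ _ _
    rw [hVdot, hsum, hbΩ', hbV', hT]
    simp only [dotProduct_add, dotProduct_neg, dotProduct_smul, smul_eq_mul,
      transpose_mulVec_dotProduct_self Rh E hRh]
    rw [dotProduct_comm bΩ, dotProduct_comm bV]
    field_simp
    ring
  have hψ_nonneg (v : Fin 3 → ℝ) : 0 ≤ ψ v := by rw [hψ]; positivity
  have hdissipation : 0 ≤ ∑ i, ψ (e i) / α i * norm3 (e i) ^ 2 :=
    Finset.sum_nonneg fun i _ => by have := hψ_nonneg (e i); have := hα i; positivity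
  refine ⟨hVdot_eq, ?_, ?_⟩ <;> rw [hVdot_eq] <;>
    nlinarith [sq_nonneg (norm3 S), sq_nonneg (norm3 E)]

/-- the Lyapunov derivative of the proposed observer satisfies
`V̇ = −Σᵢ (ψ(eᵢ)/αᵢ)‖eᵢ‖² − k_w ‖Σᵢ (1/αᵢ)[yᵢ]× R̂ᵀ eᵢ‖² − k_w ‖Σᵢ (1/αᵢ) eᵢ‖² ≤ 0`. -/
theorem lyapunov_derivative (n : ℕ) (hn : 1 ≤ n) (kp kw γ : ℝ)
    (hkp : 0 < kp) (hkw : 0 < kw) (hγ : 0 < γ)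
    (α : Fin n → ℝ) (hα : ∀ i, 0 < α i)
    (e y : Fin n → Fin 3 → ℝ) (bΩ bV : Fin 3 → ℝ)
    (Rh : Matrix (Fin 3) (Fin 3) ℝ) (hRh : Rh * Rhᵀ = 1) (hdeth : Rh.det = 1)
    (ψ : (Fin 3 → ℝ) → ℝ) (hψ : ∀ v, ψ v = kp * (1 + norm3 v ^ 2) / 4)
    (ph' : Fin n → Fin 3 → ℝ) (hph' : ∀ i, ph' i = -(ψ (e i)) • e i)
    (WΩ WV bhΩ' bhV' : Fin 3 → ℝ)
    (hWΩ : WΩ = -(kw • ∑ i, (α i)⁻¹ • (skew (y i) *ᵥ (Rhᵀ *ᵥ e i))))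
    (hWV : WV = -(kw • ∑ i, (α i)⁻¹ • (Rhᵀ *ᵥ e i)))
    (hbΩ' : bhΩ' = -(γ • ∑ i, (α i)⁻¹ • (skew (y i) *ᵥ (Rhᵀ *ᵥ e i))))
    (hbV' : bhV' = -(γ • ∑ i, (α i)⁻¹ • (Rhᵀ *ᵥ e i)))
    (e' : Fin n → Fin 3 → ℝ)
    (he' : ∀ i, e' i = ph' i + (Rh * skew (y i)) *ᵥ (bΩ - WΩ) - Rh *ᵥ (bV - WV))
    (Vdot : ℝ)
    (hVdot : Vdot = (∑ i, (α i)⁻¹ * (e i ⬝ᵥ e' i))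
      - γ⁻¹ * (bΩ ⬝ᵥ bhΩ') - γ⁻¹ * (bV ⬝ᵥ bhV')) :
    Vdot = -(∑ i, ψ (e i) / α i * norm3 (e i) ^ 2)
        - kw * norm3 (∑ i, (α i)⁻¹ • (skew (y i) *ᵥ (Rhᵀ *ᵥ e i))) ^ 2
        - kw * norm3 (∑ i, (α i)⁻¹ • e i) ^ 2 ∧
    Vdot ≤ -(∑ i, ψ (e i) / α i * norm3 (e i) ^ 2)
        - kw * norm3 (∑ i, (α i)⁻¹ • e i) ^ 2 ∧
    Vdot ≤ 0 :=
  lyapunov_derivative_general n kp kw γ hkp hkw hγ α hα e y bΩ bV Rh hRh ψ hψ ph' hph' WΩ WV bhΩ'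
    bhV' hWΩ hWV hbΩ' hbV' e' he' Vdot hVdot
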